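/- Fix α ∈ (0,2) and ρ ∈ (0,1], set τ₁ = 4 + α − αρ and τ₂ = α(2 − α)ρ, and let β satisfy 0 < β < (√(τ₁² + 12τ₂) − τ₁)/6. Let x^{(0)} = x^{(1)} ∈ range(Aᴴ) and for k ≥ 1 define the mFDBK iterate x^{(k+1)} = x^{(k)} + α·(η_kᴴ(b − A x^{(k)})/‖Aᴴ η_k‖₂²)·Aᴴ η_k + β·(x^{(k)} − x^{(k−1)}), where η_k = η(x^{(k)}). Assume that for every k ≥ 1 with b − A x^{(k)} ≠ 0 one has ((1/2)·‖A‖_F²/‖A_{Û(x^{(k)}),:}‖_F² + 1/2)·(‖A_{U(x^{(k)}),:}‖_F²/‖A‖_F²)·(σ_r(A)²/σ₁(A_{U(x^{(k)}),:})²) ≥ ρ. Then, with γ₁ = (1 + 3β + β²) + (α² − 2α − αβ)ρ, γ₂ = 2β² + (1+α)β, p = (√(γ₁² + 4γ₂) − γ₁)/2 and q = (√(γ₁² + 4γ₂) + γ₁)/2, one has q < 1 and ‖x^{(k+1)} − x_*‖₂² ≤ q^k·(1 + p)·‖x^{(0)} − x_*‖₂² for every k ≥ 0. -/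

import Mathlib

/-!
Let `e_k = x^{(k)} - x_*`; all `e_k` lie in `range Aᴴ`. One step reads
`e_{k+1} = e_k + d_k + β (e_k - e_{k-1})` with `d_k = α (‖η_k‖² / ‖Aᴴη_k‖²) Aᴴη_k`, and since
`η_kᴴ(b - A x^{(k)}) = ‖η_k‖²` one has `Re ⟪e_k, d_k⟫ = -α φ_k`, `‖d_k‖² = α² φ_k` with
`φ_k = ‖η_k‖⁴ / ‖Aᴴη_k‖²`. Every selected row has `ψ_i ≥ ψ_max/2 + ‖r‖²/(2‖A‖_F²)` and
`‖r‖² ≤ ψ_max ‖A_{Û,:}‖_F²`, so `‖η_k‖² ≥ ρ̂_k σ₁(A_{U,:})² ‖e_k‖²` (using `‖A e_k‖² ≥ σ_r² ‖e_k‖²`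
on `range Aᴴ`), while `‖Aᴴη_k‖² ≤ σ₁(A_{U,:})² ‖η_k‖²`; hence `φ_k ≥ ρ ‖e_k‖²`. Expanding the
square gives `‖e_{k+1}‖² ≤ γ₁ ‖e_k‖² + γ₂ ‖e_{k-1}‖²`. As `γ₁ + p = q` and `p q = γ₂`, the quantity
`‖e_{k+1}‖² + p ‖e_k‖²` contracts by the factor `q`, and `q < 1` amounts to `γ₁ + γ₂ < 1`, i.e. to
`3β² + τ₁β < τ₂`, which is the constraint on `β`.
-/

open Matrix Finset

noncomputable section

/-- Squared Euclidean norm `‖v‖₂²` of a complex vector. -/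
def vecNormSq {k : ℕ} (v : Fin k → ℂ) : ℝ := ∑ i, ‖v i‖ ^ 2

variable {m n : ℕ}

/-- Squared Euclidean norm `‖A_{i,:}‖₂²` of the `i`-th row of `A`. -/
def rowNormSq (A : Matrix (Fin m) (Fin n) ℂ) (i : Fin m) : ℝ := ∑ j, ‖A i j‖ ^ 2

/-- Squared Frobenius norm `‖A‖_F²`. -/
def frobSq (A : Matrix (Fin m) (Fin n) ℂ) : ℝ := ∑ i, ∑ j, ‖A i j‖ ^ 2

/-- `ψ_i(x) = |b_i − A_{i,:} x|² / ‖A_{i,:}‖₂²`. -/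
def psi (A : Matrix (Fin m) (Fin n) ℂ) (b : Fin m → ℂ) (x : Fin n → ℂ) (i : Fin m) : ℝ :=
  ‖b i - A.mulVec x i‖ ^ 2 / rowNormSq A i

/-- `max_{i ∈ [m]} ψ_i(x)`. -/
def psiMax (A : Matrix (Fin m) (Fin n) ℂ) (b : Fin m → ℂ) (x : Fin n → ℂ) : ℝ :=
  ⨆ i, psi A b x i

/-- The row submatrix `A_{S,:}` of `A`, realized by replacing the rows outside `S` with zero
(which changes neither the Frobenius norm nor the largest singular value). -/
def rowSub (A : Matrix (Fin m) (Fin n) ℂ) (S : Finset (Fin m)) : Matrix (Fin m) (Fin n) ℂ :=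
  fun i j => if i ∈ S then A i j else 0

/-- `σ_r(A)²` : the smallest nonzero eigenvalue of `AᴴA`. -/
def sigmaRSq (A : Matrix (Fin m) (Fin n) ℂ) : ℝ :=
  sInf {μ : ℝ | μ ≠ 0 ∧ ∃ i, (Matrix.isHermitian_conjTranspose_mul_self A).eigenvalues i = μ}

/-- `σ₁(M)²` : the largest eigenvalue of `MᴴM`, i.e. the largest singular value squared. -/
def sigma1Sq {k : Type*} [Fintype k] (M : Matrix k (Fin n) ℂ) : ℝ :=
  ⨆ i, (Matrix.isHermitian_conjTranspose_mul_self M).eigenvalues i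

/-- `Û(x) = {i ∈ [m] : ψ_i(x) ≠ 0}`. -/
def Uhat (A : Matrix (Fin m) (Fin n) ℂ) (b : Fin m → ℂ) (x : Fin n → ℂ) : Finset (Fin m) :=
  Finset.univ.filter fun i => psi A b x i ≠ 0

/-- The greedy index set `U(x)` with relaxation parameter `θ = 1/2`. -/
def Ugreedy (A : Matrix (Fin m) (Fin n) ℂ) (b : Fin m → ℂ) (x : Fin n → ℂ) : Finset (Fin m) :=
  Finset.univ.filter fun i =>
    (1 / 2) * psiMax A b x + (1 / 2) * (vecNormSq (b - A.mulVec x) / frobSq A) ≤ psi A b x i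

/-- `η(x) = Σ_{i ∈ U(x)} (b_i − A_{i,:}x) e_i`. -/
def eta (A : Matrix (Fin m) (Fin n) ℂ) (b : Fin m → ℂ) (x : Fin n → ℂ) : Fin m → ℂ :=
  fun i => if i ∈ Ugreedy A b x then b i - A.mulVec x i else 0

/-- `uᴴ v`, the conjugate dot product. -/
def dotc {k : ℕ} (u v : Fin k → ℂ) : ℂ := ∑ i, (starRingEnd ℂ) (u i) * v i

/-- `φ(x, η) = |ηᴴ(b − A x)|² / ‖Aᴴ η‖₂²`. -/
def phi (A : Matrix (Fin m) (Fin n) ℂ) (b : Fin m → ℂ) (x : Fin n → ℂ) (η : Fin m → ℂ) : ℝ :=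
  ‖dotc η (b - A.mulVec x)‖ ^ 2 / vecNormSq (Aᴴ.mulVec η)

end

open scoped InnerProductSpace ComplexConjugate

section Dotc

variable {k l : ℕ}

lemma dotc_eq_star_dotProduct (u v : Fin k → ℂ) : dotc u v = star u ⬝ᵥ v := rfl

lemma dotc_eq_inner (u v : Fin k → ℂ) :
    dotc u v = ⟪WithLp.toLp 2 u, WithLp.toLp 2 v⟫_ℂ := by
  simp [dotc, EuclideanSpace.inner_eq_star_dotProduct, dotProduct, mul_comm]

lemma vecNormSq_eq_norm_sq (v : Fin k → ℂ) : vecNormSq v = ‖WithLp.toLp 2 v‖ ^ 2 := by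
  rw [EuclideanSpace.norm_sq_eq]; rfl

lemma vecNormSq_nonneg (v : Fin k → ℂ) : 0 ≤ vecNormSq v := by
  unfold vecNormSq; positivity

lemma vecNormSq_eq_zero {v : Fin k → ℂ} : vecNormSq v = 0 ↔ v = 0 := by
  simp [vecNormSq_eq_norm_sq]

lemma vecNormSq_neg (v : Fin k → ℂ) : vecNormSq (-v) = vecNormSq v := by simp [vecNormSq]

lemma dotc_self (v : Fin k → ℂ) : dotc v v = vecNormSq v := by
  rw [dotc_eq_inner, vecNormSq_eq_norm_sq, inner_self_eq_norm_sq_to_K]; push_cast; rfl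

lemma dotc_conjTranspose_mulVec (A : Matrix (Fin l) (Fin k) ℂ) (u : Fin l → ℂ) (v : Fin k → ℂ) :
    dotc (Aᴴ *ᵥ u) v = dotc u (A *ᵥ v) := by
  rw [dotc_eq_star_dotProduct, star_mulVec, conjTranspose_conjTranspose, ← dotProduct_mulVec]; rfl

lemma dotc_zero_right (u : Fin k → ℂ) : dotc u 0 = 0 := by simp [dotc]

lemma dotc_neg_right (u v : Fin k → ℂ) : dotc u (-v) = -dotc u v := by simp [dotc]

lemma dotc_comm (u v : Fin k → ℂ) : dotc u v = conj (dotc v u) := by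
  simp only [dotc_eq_inner, inner_conj_symm]

lemma vecNormSq_mulVec_eq_re_dotc (M : Matrix (Fin l) (Fin k) ℂ) (v : Fin k → ℂ) :
    vecNormSq (M *ᵥ v) = (dotc v ((Mᴴ * M) *ᵥ v)).re := by
  rw [← mulVec_mulVec, dotc_comm, Complex.conj_re, dotc_conjTranspose_mulVec, dotc_self,
    Complex.ofReal_re]

end Dotc

section Spectral

variable {k l : ℕ}

lemma re_dotc_mulVec_eq_sum_eigenvalues {H : Matrix (Fin k) (Fin k) ℂ} (hH : H.IsHermitian)
    (v : Fin k → ℂ) :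
    (dotc v (H *ᵥ v)).re =
      ∑ j, hH.eigenvalues j * ‖⟪hH.eigenvectorBasis j, WithLp.toLp 2 v⟫_ℂ‖ ^ 2 := by
  set b := hH.eigenvectorBasis
  have hcoord : ∀ j,
      ⟪b j, WithLp.toLp 2 (H *ᵥ v)⟫_ℂ = hH.eigenvalues j * ⟪b j, WithLp.toLp 2 v⟫_ℂ := by
    intro j
    calc ⟪b j, WithLp.toLp 2 (H *ᵥ v)⟫_ℂ = dotc (Hᴴ *ᵥ b j) v := by
          rw [dotc_conjTranspose_mulVec, dotc_eq_inner]
      _ = ⟪(hH.eigenvalues j : ℂ) • b j, WithLp.toLp 2 v⟫_ℂ := by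
          rw [hH.eq, hH.mulVec_eigenvectorBasis, dotc_eq_inner]; rfl
      _ = _ := by rw [inner_smul_left, Complex.conj_ofReal]
  rw [dotc_eq_inner, ← b.sum_inner_mul_inner, Complex.re_sum]
  refine Finset.sum_congr rfl fun j _ => ?_
  rw [hcoord, ← inner_conj_symm, mul_left_comm, Complex.conj_mul']
  norm_cast

lemma vecNormSq_eq_sum_eigenvectorBasis {H : Matrix (Fin k) (Fin k) ℂ} (hH : H.IsHermitian)
    (v : Fin k → ℂ) :
    vecNormSq v = ∑ j, ‖⟪hH.eigenvectorBasis j, WithLp.toLp 2 v⟫_ℂ‖ ^ 2 := by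
  rw [vecNormSq_eq_norm_sq, OrthonormalBasis.sum_sq_norm_inner_right]

lemma sigma1Sq_nonneg {ι : Type*} [Fintype ι] (M : Matrix ι (Fin k) ℂ) : 0 ≤ sigma1Sq M :=
  Real.iSup_nonneg (eigenvalues_conjTranspose_mul_self_nonneg M)

lemma vecNormSq_mulVec_le (M : Matrix (Fin l) (Fin k) ℂ) (v : Fin k → ℂ) :
    vecNormSq (M *ᵥ v) ≤ sigma1Sq M * vecNormSq v := by
  have hH := isHermitian_conjTranspose_mul_self M
  rw [vecNormSq_mulVec_eq_re_dotc, re_dotc_mulVec_eq_sum_eigenvalues hH,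
    vecNormSq_eq_sum_eigenvectorBasis hH, Finset.mul_sum]
  exact Finset.sum_le_sum fun j _ =>
    mul_le_mul_of_nonneg_right (le_ciSup (Set.finite_range _).bddAbove j) (sq_nonneg _)

lemma vecNormSq_conjTranspose_mulVec_le (M : Matrix (Fin l) (Fin k) ℂ) (u : Fin l → ℂ) :
    vecNormSq (Mᴴ *ᵥ u) ≤ sigma1Sq M * vecNormSq u := by
  set v := Mᴴ *ᵥ u
  have hcs : vecNormSq v ≤ ‖WithLp.toLp 2 u‖ * ‖WithLp.toLp 2 (M *ᵥ v)‖ := by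
    have := re_inner_le_norm (𝕜 := ℂ) (WithLp.toLp 2 u) (WithLp.toLp 2 (M *ᵥ v))
    rw [← dotc_eq_inner, ← dotc_conjTranspose_mulVec, dotc_self] at this
    exact_mod_cast this
  have hM := vecNormSq_mulVec_le M v
  simp only [vecNormSq_eq_norm_sq] at hM hcs ⊢
  set a := ‖WithLp.toLp 2 u‖
  set c := ‖WithLp.toLp 2 (M *ᵥ v)‖
  set V := ‖WithLp.toLp 2 v‖ ^ 2
  have hV : 0 ≤ V := by positivity
  have key : V * V ≤ (sigma1Sq M * a ^ 2) * V :=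
    calc V * V ≤ (a * c) * (a * c) := mul_self_le_mul_self hV hcs
      _ = a ^ 2 * c ^ 2 := by ring
      _ ≤ a ^ 2 * (sigma1Sq M * V) := mul_le_mul_of_nonneg_left hM (sq_nonneg a)
      _ = (sigma1Sq M * a ^ 2) * V := by ring
  rcases hV.eq_or_lt with h0 | hpos
  · rw [← h0]; exact mul_nonneg (sigma1Sq_nonneg M) (sq_nonneg a)
  · exact le_of_mul_le_mul_right key hpos

lemma conjTranspose_mulVec_eq_zero_of_mulVec_eq_zero {A : Matrix (Fin l) (Fin k) ℂ}
    {y : Fin l → ℂ} (h : A *ᵥ (Aᴴ *ᵥ y) = 0) : Aᴴ *ᵥ y = 0 := by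
  have : (vecNormSq (Aᴴ *ᵥ y) : ℂ) = 0 := by
    rw [← dotc_self, dotc_conjTranspose_mulVec, h, dotc_zero_right]
  exact vecNormSq_eq_zero.1 (by exact_mod_cast this)

lemma sigmaRSq_mul_vecNormSq_le (A : Matrix (Fin l) (Fin k) ℂ) (y : Fin l → ℂ) :
    sigmaRSq A * vecNormSq (Aᴴ *ᵥ y) ≤ vecNormSq (A *ᵥ (Aᴴ *ᵥ y)) := by
  have hH := isHermitian_conjTranspose_mul_self A
  rw [vecNormSq_mulVec_eq_re_dotc A, re_dotc_mulVec_eq_sum_eigenvalues hH,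
    vecNormSq_eq_sum_eigenvectorBasis hH, Finset.mul_sum]
  refine Finset.sum_le_sum fun j _ => ?_
  by_cases hj : hH.eigenvalues j = 0
  -- on `range Aᴴ` the coordinates along the kernel of `Aᴴ * A` vanish
  · have hAb : A *ᵥ hH.eigenvectorBasis j = 0 := by
      refine vecNormSq_eq_zero.1 ?_
      rw [vecNormSq_mulVec_eq_re_dotc, hH.mulVec_eigenvectorBasis, hj, zero_smul,
        dotc_zero_right, Complex.zero_re]
    have hcoord : ⟪hH.eigenvectorBasis j, WithLp.toLp 2 (Aᴴ *ᵥ y)⟫_ℂ = 0 := by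
      rw [← dotc_eq_inner, dotc_comm, dotc_conjTranspose_mulVec, hAb, dotc_zero_right, map_zero]
    simp [hcoord]
  · refine mul_le_mul_of_nonneg_right (csInf_le ⟨0, ?_⟩ ⟨hj, j, rfl⟩) (sq_nonneg _)
    rintro μ ⟨-, i, rfl⟩
    exact eigenvalues_conjTranspose_mul_self_nonneg A i

end Spectral

open RCLike in
lemma norm_add_add_smul_sub_sq_le {𝕜 E : Type*} [RCLike 𝕜] [NormedAddCommGroup E]
    [InnerProductSpace 𝕜 E] {e e' d : E} {α β ρ φ : ℝ} (hα0 : 0 ≤ α) (hα2 : α ≤ 2)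
    (hβ0 : 0 ≤ β) (hβ : β ≤ α * (3 - α) * ρ) (hed : re ⟪e, d⟫_𝕜 = -(α * φ))
    (hd : ‖d‖ ^ 2 = α ^ 2 * φ) (hφ : ρ * ‖e‖ ^ 2 ≤ φ) :
    ‖e + d + (β : 𝕜) • (e - e')‖ ^ 2 ≤
      ((1 + 3 * β + β ^ 2) + (α ^ 2 - 2 * α - α * β) * ρ) * ‖e‖ ^ 2 +
        (2 * β ^ 2 + (1 + α) * β) * ‖e'‖ ^ 2 := by
  set u := e + d
  have hu : ‖u‖ ^ 2 = ‖e‖ ^ 2 - α * (2 - α) * φ := by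
    rw [norm_add_sq (𝕜 := 𝕜), hed, hd]; ring
  have hue : re ⟪u, e⟫_𝕜 = ‖e‖ ^ 2 - α * φ := by
    rw [inner_add_left, map_add, inner_re_symm (𝕜 := 𝕜) d e, hed, inner_self_eq_norm_sq]; ring
  have hue' : -(2 * re ⟪u, e'⟫_𝕜) ≤ ‖u‖ ^ 2 + ‖e'‖ ^ 2 := by
    have := re_inner_le_norm (𝕜 := 𝕜) (-u) e'
    rw [inner_neg_left, map_neg, norm_neg] at this
    nlinarith [two_mul_le_add_sq ‖u‖ ‖e'‖]
  have hee' : ‖e - e'‖ ^ 2 ≤ 2 * ‖e‖ ^ 2 + 2 * ‖e'‖ ^ 2 := by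
    nlinarith [norm_sub_le e e', norm_nonneg (e - e'), two_mul_le_add_sq ‖e‖ ‖e'‖]
  have hexpand : ‖u + (β : 𝕜) • (e - e')‖ ^ 2 =
      ‖u‖ ^ 2 + 2 * β * (re ⟪u, e⟫_𝕜 - re ⟪u, e'⟫_𝕜) + β ^ 2 * ‖e - e'‖ ^ 2 := by
    rw [norm_add_sq (𝕜 := 𝕜), inner_smul_right, norm_smul, inner_sub_right, re_ofReal_mul, map_sub,
      mul_pow, norm_ofReal, sq_abs]
    ring
  have hcoef : 0 ≤ α * ((1 + β) * (2 - α) + 2 * β) := by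
    have : 0 ≤ 2 - α := by linarith
    positivity
  calc ‖u + (β : 𝕜) • (e - e')‖ ^ 2
      ≤ (1 + 3 * β + 2 * β ^ 2) * ‖e‖ ^ 2 - α * ((1 + β) * (2 - α) + 2 * β) * φ +
          (β + 2 * β ^ 2) * ‖e'‖ ^ 2 := by
        rw [hexpand, hue]
        nlinarith [mul_le_mul_of_nonneg_left hue' hβ0, mul_le_mul_of_nonneg_left hee' (sq_nonneg β)]
    _ ≤ (1 + 3 * β + 2 * β ^ 2) * ‖e‖ ^ 2 - α * ((1 + β) * (2 - α) + 2 * β) * (ρ * ‖e‖ ^ 2) +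
          (β + 2 * β ^ 2) * ‖e'‖ ^ 2 := by
        gcongr
    _ ≤ _ := by
        nlinarith [mul_nonneg (mul_nonneg hβ0 (sub_nonneg.2 hβ)) (sq_nonneg ‖e‖),
          mul_nonneg (mul_nonneg hα0 hβ0) (sq_nonneg ‖e'‖)]

section Greedy

variable {m n : ℕ} (A : Matrix (Fin m) (Fin n) ℂ) (b : Fin m → ℂ) (x : Fin n → ℂ)

noncomputable def rhoHat : ℝ :=
  ((1 / 2) * (frobSq A / frobSq (rowSub A (Uhat A b x))) + 1 / 2) *
    (frobSq (rowSub A (Ugreedy A b x)) / frobSq A) *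
    (sigmaRSq A / sigma1Sq (rowSub A (Ugreedy A b x)))

lemma rowNormSq_nonneg (i : Fin m) : 0 ≤ rowNormSq A i := by
  unfold rowNormSq; positivity

lemma frobSq_rowSub (S : Finset (Fin m)) : frobSq (rowSub A S) = ∑ i ∈ S, rowNormSq A i := by
  rw [← Fintype.sum_ite_mem]
  refine Finset.sum_congr rfl fun i _ => ?_
  by_cases hi : i ∈ S <;> simp [rowSub, rowNormSq, hi]

lemma frobSq_rowSub_nonneg (S : Finset (Fin m)) : 0 ≤ frobSq (rowSub A S) := by
  unfold frobSq; positivity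

lemma psi_nonneg (i : Fin m) : 0 ≤ psi A b x i := by
  unfold psi rowNormSq; positivity

lemma psi_le_psiMax (i : Fin m) : psi A b x i ≤ psiMax A b x :=
  le_ciSup (Set.finite_range _).bddAbove i

lemma psiMax_nonneg : 0 ≤ psiMax A b x :=
  Real.iSup_nonneg (psi_nonneg A b x)

variable {A b} {xs : Fin n → ℂ}

lemma norm_residual_sq_eq_psi_mul (hxs : A *ᵥ xs = b) (i : Fin m) :
    ‖(b - A *ᵥ x) i‖ ^ 2 = psi A b x i * rowNormSq A i := by
  by_cases h : rowNormSq A i = 0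
  -- a zero row forces `b i = 0` by consistency, so the junk value `psi A b x i = 0` is harmless
  · have hrow : A i = 0 := funext fun j => by
      simpa using (Finset.sum_eq_zero_iff_of_nonneg (fun j _ => sq_nonneg ‖A i j‖)).1 h j
        (Finset.mem_univ j)
    have hAv : ∀ v, (A *ᵥ v) i = 0 := fun v => by simp [mulVec, hrow]
    rw [h, mul_zero, Pi.sub_apply, ← hxs, hAv, hAv, sub_zero, norm_zero]
    norm_num
  · rw [psi, div_mul_cancel₀ _ h]; rfl

lemma vecNormSq_residual_le (hxs : A *ᵥ xs = b) :
    vecNormSq (b - A *ᵥ x) ≤ psiMax A b x * frobSq (rowSub A (Uhat A b x)) := by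
  have hsupp : vecNormSq (b - A *ᵥ x) = ∑ i ∈ Uhat A b x, ‖(b - A *ᵥ x) i‖ ^ 2 := by
    refine (Finset.sum_filter_of_ne fun i _ hi => ?_).symm
    rw [norm_residual_sq_eq_psi_mul x hxs, mul_ne_zero_iff] at hi
    exact hi.1
  rw [hsupp, frobSq_rowSub, Finset.mul_sum]
  refine Finset.sum_le_sum fun i _ => ?_
  rw [norm_residual_sq_eq_psi_mul x hxs]
  exact mul_le_mul_of_nonneg_right (psi_le_psiMax A b x i) (rowNormSq_nonneg A i)

lemma vecNormSq_eta :
    vecNormSq (eta A b x) = ∑ i ∈ Ugreedy A b x, ‖(b - A *ᵥ x) i‖ ^ 2 := by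
  rw [← Fintype.sum_ite_mem]
  refine Finset.sum_congr rfl fun i _ => ?_
  by_cases hi : i ∈ Ugreedy A b x <;> simp [eta, hi]

lemma dotc_eta_residual :
    dotc (eta A b x) (b - A *ᵥ x) = vecNormSq (eta A b x) := by
  rw [← dotc_self, dotc, dotc]
  refine Finset.sum_congr rfl fun i _ => ?_
  by_cases hi : i ∈ Ugreedy A b x <;> simp [eta, hi]

lemma conjTranspose_mulVec_eta :
    Aᴴ *ᵥ eta A b x = (rowSub A (Ugreedy A b x))ᴴ *ᵥ eta A b x := by
  ext j
  simp only [mulVec, dotProduct]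
  refine Finset.sum_congr rfl fun i _ => ?_
  by_cases hi : i ∈ Ugreedy A b x <;> simp [eta, rowSub, hi]

lemma vecNormSq_conjTranspose_mulVec_eta_le :
    vecNormSq (Aᴴ *ᵥ eta A b x) ≤
      sigma1Sq (rowSub A (Ugreedy A b x)) * vecNormSq (eta A b x) := by
  rw [conjTranspose_mulVec_eta]
  exact vecNormSq_conjTranspose_mulVec_le _ _

lemma threshold_mul_frobSq_le_vecNormSq_eta (hxs : A *ᵥ xs = b) :
    ((1 / 2) * psiMax A b x + (1 / 2) * (vecNormSq (b - A *ᵥ x) / frobSq A)) *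
      frobSq (rowSub A (Ugreedy A b x)) ≤ vecNormSq (eta A b x) := by
  rw [frobSq_rowSub, Finset.mul_sum, vecNormSq_eta]
  refine Finset.sum_le_sum fun i hi => ?_
  rw [norm_residual_sq_eq_psi_mul x hxs]
  exact mul_le_mul_of_nonneg_right (Finset.mem_filter.1 hi).2 (rowNormSq_nonneg A i)

lemma mul_vecNormSq_residual_le_vecNormSq_eta (hxs : A *ᵥ xs = b) :
    ((1 / 2) * (frobSq A / frobSq (rowSub A (Uhat A b x))) + 1 / 2) *
      (frobSq (rowSub A (Ugreedy A b x)) / frobSq A) * vecNormSq (b - A *ᵥ x) ≤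
        vecNormSq (eta A b x) := by
  set F := frobSq A
  set FUhat := frobSq (rowSub A (Uhat A b x))
  set FU := frobSq (rowSub A (Ugreedy A b x))
  set R := vecNormSq (b - A *ᵥ x)
  rcases eq_or_ne F 0 with hF | hF
  · simpa [hF] using vecNormSq_nonneg _
  have hRFUhat : R / FUhat ≤ psiMax A b x :=
    div_le_of_le_mul₀ (frobSq_rowSub_nonneg A _) (psiMax_nonneg A b x)
      (by linarith [vecNormSq_residual_le x hxs])
  calc ((1 / 2) * (F / FUhat) + 1 / 2) * (FU / F) * R
      = ((1 / 2) * (R / FUhat) + (1 / 2) * (R / F)) * FU := by field_simp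
    _ ≤ ((1 / 2) * psiMax A b x + (1 / 2) * (R / F)) * FU := by
        gcongr
        exact frobSq_rowSub_nonneg A _
    _ ≤ vecNormSq (eta A b x) := threshold_mul_frobSq_le_vecNormSq_eta x hxs

lemma mulVec_sub_eq_neg_residual (hxs : A *ᵥ xs = b) : A *ᵥ (x - xs) = -(b - A *ᵥ x) := by
  rw [mulVec_sub, hxs, neg_sub]

lemma dotc_conjTranspose_mulVec_eta_sub (hxs : A *ᵥ xs = b) :
    dotc (Aᴴ *ᵥ eta A b x) (x - xs) = -(vecNormSq (eta A b x) : ℂ) := by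
  rw [dotc_conjTranspose_mulVec, mulVec_sub_eq_neg_residual x hxs, dotc_neg_right,
    dotc_eta_residual]

lemma phi_eta : phi A b x (eta A b x) =
    vecNormSq (eta A b x) ^ 2 / vecNormSq (Aᴴ *ᵥ eta A b x) := by
  rw [phi, dotc_eta_residual, Complex.norm_real, Real.norm_of_nonneg (vecNormSq_nonneg _)]

lemma rhoHat_mul_sigma1Sq_mul_vecNormSq_le (hxs : A *ᵥ xs = b) {y : Fin m → ℂ}
    (hy : Aᴴ *ᵥ y = x - xs) :
    rhoHat A b x * sigma1Sq (rowSub A (Ugreedy A b x)) * vecNormSq (x - xs) ≤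
      vecNormSq (eta A b x) := by
  set lam := sigma1Sq (rowSub A (Ugreedy A b x)) with hlam_def
  rcases eq_or_ne lam 0 with hlam | hlam
  · simpa [hlam] using vecNormSq_nonneg _
  have hσ : sigmaRSq A * vecNormSq (x - xs) ≤ vecNormSq (b - A *ᵥ x) := by
    have := sigmaRSq_mul_vecNormSq_le A y
    rwa [hy, mulVec_sub_eq_neg_residual x hxs, vecNormSq_neg] at this
  calc rhoHat A b x * lam * vecNormSq (x - xs)
      = ((1 / 2) * (frobSq A / frobSq (rowSub A (Uhat A b x))) + 1 / 2) *
          (frobSq (rowSub A (Ugreedy A b x)) / frobSq A) * (sigmaRSq A * vecNormSq (x - xs)) := by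
        rw [rhoHat, ← hlam_def]; field_simp
    _ ≤ ((1 / 2) * (frobSq A / frobSq (rowSub A (Uhat A b x))) + 1 / 2) *
          (frobSq (rowSub A (Ugreedy A b x)) / frobSq A) * vecNormSq (b - A *ᵥ x) := by
        have := frobSq_rowSub_nonneg A (Uhat A b x)
        have := frobSq_rowSub_nonneg A (Ugreedy A b x)
        have : 0 ≤ frobSq A := by unfold frobSq; positivity
        gcongr
    _ ≤ vecNormSq (eta A b x) := mul_vecNormSq_residual_le_vecNormSq_eta x hxs

lemma rho_mul_vecNormSq_le_phi_eta (hxs : A *ᵥ xs = b)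
    (he : x - xs ∈ LinearMap.range Aᴴ.mulVecLin) {ρ : ℝ} (hρ0 : 0 < ρ)
    (hρ : b - A *ᵥ x ≠ 0 → ρ ≤ rhoHat A b x) :
    ρ * vecNormSq (x - xs) ≤ phi A b x (eta A b x) := by
  obtain ⟨y, hy⟩ := he
  rw [mulVecLin_apply] at hy
  have hφ : 0 ≤ phi A b x (eta A b x) := by
    rw [phi_eta]; exact div_nonneg (sq_nonneg _) (vecNormSq_nonneg _)
  by_cases hr : b - A *ᵥ x = 0
  · have he0 : x - xs = 0 := by
      rw [← hy]
      refine conjTranspose_mulVec_eq_zero_of_mulVec_eq_zero ?_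
      rw [hy, mulVec_sub_eq_neg_residual x hxs, hr, neg_zero]
    rwa [he0, vecNormSq_eq_zero.2 rfl, mul_zero]
  set η := eta A b x
  set lam := sigma1Sq (rowSub A (Ugreedy A b x)) with hlam_def
  have hlam : 0 < lam := by
    refine lt_of_le_of_ne (sigma1Sq_nonneg _) fun h => ?_
    have := hρ hr
    rw [rhoHat, ← hlam_def, ← h, div_zero, mul_zero] at this
    linarith
  have hs : ρ * lam * vecNormSq (x - xs) ≤ vecNormSq η :=
    le_trans (by gcongr; exacts [vecNormSq_nonneg _, hρ hr])
      (rhoHat_mul_sigma1Sq_mul_vecNormSq_le x hxs hy)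
  have hG : vecNormSq (Aᴴ *ᵥ η) ≤ lam * vecNormSq η := vecNormSq_conjTranspose_mulVec_eta_le x
  rw [phi_eta]
  rcases (vecNormSq_nonneg (Aᴴ *ᵥ η)).eq_or_lt with hG0 | hG0
  · have hη : vecNormSq η = 0 := by
      have := dotc_conjTranspose_mulVec_eta_sub x hxs
      rw [vecNormSq_eq_zero.1 hG0.symm] at this
      simpa [dotc] using this
    rw [hη, hG0.symm, div_zero]
    rw [hη] at hs
    nlinarith [mul_nonneg hρ0.le (vecNormSq_nonneg (x - xs))]
  · have hρe : 0 ≤ ρ * vecNormSq (x - xs) := mul_nonneg hρ0.le (vecNormSq_nonneg _)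
    rw [le_div_iff₀ hG0]
    nlinarith [mul_le_mul_of_nonneg_left hG hρe,
      mul_le_mul_of_nonneg_right hs (vecNormSq_nonneg η)]

lemma vecNormSq_heavyBall_step_le (x' : Fin n → ℂ) (hxs : A *ᵥ xs = b)
    (he : x - xs ∈ LinearMap.range Aᴴ.mulVecLin) {α β ρ : ℝ} (hα0 : 0 ≤ α) (hα2 : α ≤ 2)
    (hβ0 : 0 ≤ β) (hβ : β ≤ α * (3 - α) * ρ) (hρ0 : 0 < ρ)
    (hρ : b - A *ᵥ x ≠ 0 → ρ ≤ rhoHat A b x) :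
    vecNormSq (x + ((α : ℂ) * (dotc (eta A b x) (b - A *ᵥ x) /
          (vecNormSq (Aᴴ *ᵥ eta A b x) : ℂ))) • Aᴴ *ᵥ eta A b x + (β : ℂ) • (x - x') - xs) ≤
      ((1 + 3 * β + β ^ 2) + (α ^ 2 - 2 * α - α * β) * ρ) * vecNormSq (x - xs) +
        (2 * β ^ 2 + (1 + α) * β) * vecNormSq (x' - xs) := by
  set t : ℝ := α * (vecNormSq (eta A b x) / vecNormSq (Aᴴ *ᵥ eta A b x)) with ht
  have hc : (α : ℂ) * (dotc (eta A b x) (b - A *ᵥ x) / (vecNormSq (Aᴴ *ᵥ eta A b x) : ℂ)) =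
      (t : ℂ) := by
    rw [dotc_eta_residual, ht]; push_cast; rfl
  have hsplit : x + (t : ℂ) • Aᴴ *ᵥ eta A b x + (β : ℂ) • (x - x') - xs =
      (x - xs) + (t : ℂ) • Aᴴ *ᵥ eta A b x + (β : ℂ) • ((x - xs) - (x' - xs)) := by
    rw [sub_sub_sub_cancel_right]; abel
  have hφ := rho_mul_vecNormSq_le_phi_eta x hxs he hρ0 hρ
  have hed := dotc_conjTranspose_mulVec_eta_sub x hxs
  rw [hc, hsplit]
  set e := x - xs
  simp only [vecNormSq_eq_norm_sq, WithLp.toLp_add, WithLp.toLp_smul, WithLp.toLp_sub] at hφ ⊢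
  refine norm_add_add_smul_sub_sq_le hα0 hα2 hβ0 hβ ?_ ?_ hφ
  · rw [inner_smul_right, ← dotc_eq_inner, dotc_comm, hed, phi_eta]
    simp only [map_neg, Complex.conj_ofReal, mul_neg, map_neg, RCLike.re_to_complex,
      Complex.re_ofReal_mul, Complex.ofReal_re, ht]
    ring
  · rw [norm_smul, mul_pow, ← vecNormSq_eq_norm_sq, phi_eta, Complex.norm_real,
      Real.norm_eq_abs, sq_abs]
    rcases eq_or_ne (vecNormSq (Aᴴ *ᵥ eta A b x)) 0 with hG | hG
    · simp [ht, hG]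
    · rw [ht]; field_simp

end Greedy

lemma le_pow_mul_of_two_step {a : ℕ → ℝ} {γ1 γ2 p q : ℝ} (ha : ∀ k, 0 ≤ a k)
    (h01 : a 1 = a 0) (hrec : ∀ k, a (k + 2) ≤ γ1 * a (k + 1) + γ2 * a k) (hp : 0 ≤ p)
    (hq : 0 ≤ q) (hsum : γ1 + p = q) (hprod : p * q = γ2) (k : ℕ) :
    a (k + 1) ≤ q ^ k * (1 + p) * a 0 := by
  have hlyap : ∀ k, a (k + 1) + p * a k ≤ q ^ k * (1 + p) * a 0 := by
    intro k
    induction k with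
    | zero => rw [h01]; linarith
    | succ k ih =>
      calc a (k + 2) + p * a (k + 1) ≤ γ1 * a (k + 1) + p * q * a k + p * a (k + 1) := by
            rw [hprod]; linarith [hrec k]
        _ = q * (a (k + 1) + p * a k) := by rw [← hsum]; ring
        _ ≤ q * (q ^ k * (1 + p) * a 0) := mul_le_mul_of_nonneg_left ih hq
        _ = q ^ (k + 1) * (1 + p) * a 0 := by ring
  linarith [hlyap k, mul_nonneg hp (ha k)]

lemma quadratic_roots {γ1 γ2 p q : ℝ} (hγ2 : 0 ≤ γ2)
    (hp : p = (√(γ1 ^ 2 + 4 * γ2) - γ1) / 2) (hq : q = (√(γ1 ^ 2 + 4 * γ2) + γ1) / 2) :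
    0 ≤ p ∧ 0 ≤ q ∧ γ1 + p = q ∧ p * q = γ2 := by
  have habs : |γ1| ≤ √(γ1 ^ 2 + 4 * γ2) := Real.abs_le_sqrt (by linarith)
  have hsq : √(γ1 ^ 2 + 4 * γ2) ^ 2 = γ1 ^ 2 + 4 * γ2 := Real.sq_sqrt (by positivity)
  subst hp hq
  refine ⟨?_, ?_, by ring, by linear_combination hsq / 4⟩ <;>
    linarith [le_abs_self γ1, neg_abs_le γ1]

lemma quadratic_root_lt_one {γ1 γ2 : ℝ} (hγ2 : 0 ≤ γ2) (h : γ1 + γ2 < 1) :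
    (√(γ1 ^ 2 + 4 * γ2) + γ1) / 2 < 1 := by
  have : √(γ1 ^ 2 + 4 * γ2) < 2 - γ1 := (Real.sqrt_lt' (by linarith)).2 (by nlinarith)
  linarith

lemma three_mul_sq_add_lt_of_lt {β τ1 τ2 : ℝ} (hτ1 : 0 ≤ τ1) (hβ0 : 0 ≤ β)
    (hβ : β < (√(τ1 ^ 2 + 12 * τ2) - τ1) / 6) : 3 * β ^ 2 + τ1 * β < τ2 := by
  have := (Real.lt_sqrt (by positivity)).1 (show 6 * β + τ1 < √(τ1 ^ 2 + 12 * τ2) by linarith)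
  nlinarith

lemma momentum_bounds {α ρ β : ℝ} (hα0 : 0 < α) (hρ0 : 0 < ρ) (hρ1 : ρ ≤ 1) (hβ0 : 0 < β)
    (hβ : β < (√((4 + α - α * ρ) ^ 2 + 12 * (α * (2 - α) * ρ)) - (4 + α - α * ρ)) / 6) :
    β ≤ α * (3 - α) * ρ ∧
      ((1 + 3 * β + β ^ 2) + (α ^ 2 - 2 * α - α * β) * ρ) + (2 * β ^ 2 + (1 + α) * β) < 1 := by
  have hτ1 : 4 ≤ 4 + α - α * ρ := by linarith [mul_le_of_le_one_right hα0.le hρ1]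
  have hβτ := three_mul_sq_add_lt_of_lt (by linarith) hβ0.le hβ
  refine ⟨?_, by linarith⟩
  have : 4 * β < α * (2 - α) * ρ := by nlinarith [mul_le_mul_of_nonneg_right hτ1 hβ0.le]
  nlinarith [mul_pos hα0 hρ0]

theorem stmt8_general {m n : ℕ} (A : Matrix (Fin m) (Fin n) ℂ) (b : Fin m → ℂ)
    (xs : Fin n → ℂ) (hxs1 : A.mulVec xs = b) (hxs2 : ∃ y, xs = Aᴴ.mulVec y)
    (α ρ β τ1 τ2 γ1 γ2 p q : ℝ)
    (hα0 : 0 < α) (hα2 : α < 2) (hρ0 : 0 < ρ) (hρ1 : ρ ≤ 1)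
    (hτ1 : τ1 = 4 + α - α * ρ) (hτ2 : τ2 = α * (2 - α) * ρ)
    (hβ0 : 0 < β) (hβ : β < (Real.sqrt (τ1 ^ 2 + 12 * τ2) - τ1) / 6)
    (x : ℕ → Fin n → ℂ)
    (hx01 : x 0 = x 1) (hx0 : ∃ y, x 0 = Aᴴ.mulVec y)
    (hit : ∀ k, 1 ≤ k →
      x (k + 1) = x k
        + ((α : ℂ) * (dotc (eta A b (x k)) (b - A.mulVec (x k)) /
            (vecNormSq (Aᴴ.mulVec (eta A b (x k))) : ℂ))) • Aᴴ.mulVec (eta A b (x k))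
        + (β : ℂ) • (x k - x (k - 1)))
    (hρbound : ∀ k, 1 ≤ k → b - A.mulVec (x k) ≠ 0 →
      ρ ≤ ((1 / 2) * (frobSq A / frobSq (rowSub A (Uhat A b (x k)))) + 1 / 2) *
            (frobSq (rowSub A (Ugreedy A b (x k))) / frobSq A) *
            (sigmaRSq A / sigma1Sq (rowSub A (Ugreedy A b (x k)))))
    (hγ1 : γ1 = (1 + 3 * β + β ^ 2) + (α ^ 2 - 2 * α - α * β) * ρ)
    (hγ2 : γ2 = 2 * β ^ 2 + (1 + α) * β)
    (hp : p = (Real.sqrt (γ1 ^ 2 + 4 * γ2) - γ1) / 2)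
    (hq : q = (Real.sqrt (γ1 ^ 2 + 4 * γ2) + γ1) / 2) :
    q < 1 ∧ ∀ k, vecNormSq (x (k + 1) - xs) ≤ q ^ k * (1 + p) * vecNormSq (x 0 - xs) := by
  subst hτ1 hτ2
  obtain ⟨hβα, hγ_sum⟩ := momentum_bounds hα0 hρ0 hρ1 hβ0 hβ
  rw [← hγ1, ← hγ2] at hγ_sum
  have hγ2_nonneg : 0 ≤ γ2 := by rw [hγ2]; positivity
  obtain ⟨hp0, hq0, hsum, hprod⟩ := quadratic_roots hγ2_nonneg hp hq
  have hstep : ∀ k, x (k + 2) = x (k + 1)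
      + ((α : ℂ) * (dotc (eta A b (x (k + 1))) (b - A *ᵥ x (k + 1)) /
          (vecNormSq (Aᴴ *ᵥ eta A b (x (k + 1))) : ℂ))) • Aᴴ *ᵥ eta A b (x (k + 1))
      + (β : ℂ) • (x (k + 1) - x k) := fun k => hit (k + 1) (Nat.le_add_left 1 k)
  have hrange : ∀ k, x k ∈ LinearMap.range Aᴴ.mulVecLin := by
    intro k
    induction k using Nat.twoStepInduction with
    | zero => exact hx0.imp fun _ => Eq.symm
    | one => exact hx01 ▸ hx0.imp fun _ => Eq.symm
    | more k h0 h1 =>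
      rw [hstep k]
      exact add_mem (add_mem h1 (Submodule.smul_mem _ _ ⟨_, rfl⟩))
        (Submodule.smul_mem _ _ (sub_mem h1 h0))
  have hxs_range : xs ∈ LinearMap.range Aᴴ.mulVecLin := hxs2.imp fun _ => Eq.symm
  refine ⟨hq ▸ quadratic_root_lt_one hγ2_nonneg hγ_sum,
    le_pow_mul_of_two_step (a := fun k => vecNormSq (x k - xs)) (fun k => vecNormSq_nonneg _)
      (by rw [hx01]) (fun k => ?_) hp0 hq0 hsum hprod⟩
  rw [hstep k, hγ1, hγ2]
  exact vecNormSq_heavyBall_step_le _ _ hxs1 (sub_mem (hrange (k + 1)) hxs_range) hα0.le hα2.le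
    hβ0.le hβα hρ0 (hρbound (k + 1) (Nat.le_add_left 1 k))

/-- mFDBK convergence: with `α ∈ (0,2)`, `ρ ∈ (0,1]`, `τ₁ = 4 + α − αρ`,
`τ₂ = α(2−α)ρ`, and `0 < β < (√(τ₁² + 12τ₂) − τ₁)/6`, if the mFDBK iterates satisfy
`ρ̂_k ≥ ρ` whenever `k ≥ 1` and `b − Ax^k ≠ 0`, where
`ρ̂_k = ((1/2)‖A‖_F²/‖A_{Û(x^k),:}‖_F² + 1/2)·(‖A_{U(x^k),:}‖_F²/‖A‖_F²)·(σ_r(A)²/σ₁(A_{U(x^k),:})²)`,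
then with `γ₁ = (1+3β+β²) + (α²−2α−αβ)ρ`, `γ₂ = 2β² + (1+α)β`, `p = (√(γ₁²+4γ₂) − γ₁)/2` and
`q = (√(γ₁²+4γ₂) + γ₁)/2`, one has `q < 1` and
`‖x^{k+1} − x_*‖₂² ≤ q^k (1+p) ‖x⁰ − x_*‖₂²` for every `k ≥ 0`. -/
theorem stmt8 {m n : ℕ} (A : Matrix (Fin m) (Fin n) ℂ) (b : Fin m → ℂ)
    (hA : ∀ i, A i ≠ 0)
    (xs : Fin n → ℂ) (hxs1 : A.mulVec xs = b) (hxs2 : ∃ y, xs = Aᴴ.mulVec y)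
    (α ρ β τ1 τ2 γ1 γ2 p q : ℝ)
    (hα0 : 0 < α) (hα2 : α < 2) (hρ0 : 0 < ρ) (hρ1 : ρ ≤ 1)
    (hτ1 : τ1 = 4 + α - α * ρ) (hτ2 : τ2 = α * (2 - α) * ρ)
    (hβ0 : 0 < β) (hβ : β < (Real.sqrt (τ1 ^ 2 + 12 * τ2) - τ1) / 6)
    (x : ℕ → Fin n → ℂ)
    (hx01 : x 0 = x 1) (hx0 : ∃ y, x 0 = Aᴴ.mulVec y)
    (hit : ∀ k, 1 ≤ k →
      x (k + 1) = x k
        + ((α : ℂ) * (dotc (eta A b (x k)) (b - A.mulVec (x k)) /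
            (vecNormSq (Aᴴ.mulVec (eta A b (x k))) : ℂ))) • Aᴴ.mulVec (eta A b (x k))
        + (β : ℂ) • (x k - x (k - 1)))
    (hρbound : ∀ k, 1 ≤ k → b - A.mulVec (x k) ≠ 0 →
      ρ ≤ ((1 / 2) * (frobSq A / frobSq (rowSub A (Uhat A b (x k)))) + 1 / 2) *
            (frobSq (rowSub A (Ugreedy A b (x k))) / frobSq A) *
            (sigmaRSq A / sigma1Sq (rowSub A (Ugreedy A b (x k)))))
    (hγ1 : γ1 = (1 + 3 * β + β ^ 2) + (α ^ 2 - 2 * α - α * β) * ρ)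
    (hγ2 : γ2 = 2 * β ^ 2 + (1 + α) * β)
    (hp : p = (Real.sqrt (γ1 ^ 2 + 4 * γ2) - γ1) / 2)
    (hq : q = (Real.sqrt (γ1 ^ 2 + 4 * γ2) + γ1) / 2) :
    q < 1 ∧ ∀ k, vecNormSq (x (k + 1) - xs) ≤ q ^ k * (1 + p) * vecNormSq (x 0 - xs) :=
  stmt8_general A b xs hxs1 hxs2 α ρ β τ1 τ2 γ1 γ2 p q hα0 hα2 hρ0 hρ1 hτ1 hτ2 hβ0 hβ x hx01 hx0 hit
    hρbound hγ1 hγ2 hp hq
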